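/- arXiv:1504.02174 — 5 statements merged into one kernel-verified Lean document; each statement's English description precedes it below -/
import Mathlib

section
/- A multivalued function f : X ⊸ Y between digital images is connectivity preserving if and only if (1) for every x ∈ X, f(x) is a connected subset of Y, and (2) for any adjacent points x, x' ∈ X, the sets f(x) and f(x') are adjacent. -/
/-- A subset `A` is connected under adjacency `adj`: any two of its points are
joined by a path of consecutively adjacent points lying in `A`. -/
def ConnIn {X : Type*} (adj : X → X → Prop) (A : Set X) : Prop :=
  ∀ a ∈ A, ∀ b ∈ A,
    Relation.ReflTransGen (fun u v => adj u v ∧ u ∈ A ∧ v ∈ A) a b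

/-- Two subsets are adjacent if they contain points that are equal or adjacent. -/
def AdjSets {X : Type*} (adj : X → X → Prop) (A B : Set X) : Prop :=
  ∃ a ∈ A, ∃ b ∈ B, a = b ∨ adj a b

/-- Image of a set under a multivalued function. -/
def imageMV {X Y : Type*} (F : X → Set Y) (A : Set X) : Set Y :=
  ⋃ x ∈ A, F x

/-- A multivalued function is connectivity preserving if images of connected
sets are connected. -/
def ConnPres {X Y : Type*} (adjX : X → X → Prop) (adjY : Y → Y → Prop)
    (F : X → Set Y) : Prop :=
  ∀ A : Set X, ConnIn adjX A → ConnIn adjY (imageMV F A)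

open Relation

section Digital

variable {X Y : Type*}

/-- `ConnIn adj A` unfolds to `ReflTransGen (adjIn adj A)`-paths between points of `A`. -/
def adjIn (adj : X → X → Prop) (A : Set X) (u v : X) : Prop :=
  adj u v ∧ u ∈ A ∧ v ∈ A

lemma reflTransGen_adjIn_mono {adj : X → X → Prop} {A B : Set X} (hAB : A ⊆ B) {a b : X}
    (h : ReflTransGen (adjIn adj A) a b) : ReflTransGen (adjIn adj B) a b :=
  ReflTransGen.mono (fun _ _ ⟨huv, hu, hv⟩ => ⟨huv, hAB hu, hAB hv⟩) a b h

lemma adjSets_of_reflTransGen_adjIn_union {adj : X → X → Prop} {A B : Set X} {a b : X}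
    (hpath : ReflTransGen (adjIn adj (A ∪ B)) a b) (ha : a ∈ A) (hb : b ∈ B) :
    AdjSets adj A B := by
  suffices b ∈ A ∨ AdjSets adj A B from this.elim (fun hbA => ⟨b, hbA, b, hb, Or.inl rfl⟩) id
  clear hb
  induction hpath with
  | refl => exact Or.inl ha
  | @tail u v _ huv ih =>
    obtain ⟨hadj, -, hv | hv⟩ := huv
    · exact Or.inl hv
    · exact ih.elim (fun hu => Or.inr ⟨u, hu, v, hv, Or.inr hadj⟩) Or.inr

lemma connIn_singleton (adj : X → X → Prop) (x : X) : ConnIn adj {x} := by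
  rintro a rfl b rfl
  exact ReflTransGen.refl

lemma connIn_pair {adj : X → X → Prop} (hsymm : ∀ a b, adj a b → adj b a) {x x' : X}
    (h : adj x x') : ConnIn adj {x, x'} := by
  have hx : x ∈ ({x, x'} : Set X) := Set.mem_insert x {x'}
  have hx' : x' ∈ ({x, x'} : Set X) := Set.mem_insert_of_mem x rfl
  rintro a (rfl | rfl) b (rfl | rfl)
  · exact ReflTransGen.refl
  · exact ReflTransGen.single ⟨h, hx, hx'⟩
  · exact ReflTransGen.single ⟨hsymm _ _ h, hx', hx⟩
  · exact ReflTransGen.refl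

lemma imageMV_singleton (F : X → Set Y) (x : X) : imageMV F {x} = F x := by
  simp [imageMV]

lemma imageMV_pair (F : X → Set Y) (x x' : X) : imageMV F {x, x'} = F x ∪ F x' := by
  simp [imageMV]

lemma subset_imageMV (F : X → Set Y) {A : Set X} {x : X} (hx : x ∈ A) : F x ⊆ imageMV F A :=
  Set.subset_biUnion_of_mem (u := F) hx

lemma connIn_of_connPres {adjX : X → X → Prop} {adjY : Y → Y → Prop} {F : X → Set Y}
    (hF : ConnPres adjX adjY F) (x : X) : ConnIn adjY (F x) :=
  imageMV_singleton F x ▸ hF {x} (connIn_singleton adjX x)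

lemma adjSets_of_connPres {adjX : X → X → Prop} {adjY : Y → Y → Prop} {F : X → Set Y}
    (hsymmX : ∀ a b, adjX a b → adjX b a) (hne : ∀ x, (F x).Nonempty)
    (hF : ConnPres adjX adjY F) {x x' : X} (h : adjX x x') : AdjSets adjY (F x) (F x') := by
  have hconn : ConnIn adjY (F x ∪ F x') := imageMV_pair F x x' ▸ hF _ (connIn_pair hsymmX h)
  obtain ⟨a, ha⟩ := hne x
  obtain ⟨b, hb⟩ := hne x'
  exact adjSets_of_reflTransGen_adjIn_union (hconn a (Or.inl ha) b (Or.inr hb)) ha hb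

/-- Fibres are linked inside the image by following a path in `A` edge by edge, crossing from
`F u` to `F v` at the points given by `AdjSets`. -/
lemma connIn_imageMV {adjX : X → X → Prop} {adjY : Y → Y → Prop} {F : X → Set Y}
    (hconn : ∀ x, ConnIn adjY (F x)) (hadj : ∀ x x', adjX x x' → AdjSets adjY (F x) (F x'))
    {A : Set X} (hA : ConnIn adjX A) : ConnIn adjY (imageMV F A) := by
  have hfibre : ∀ {w}, w ∈ A → ∀ p ∈ F w, ∀ q ∈ F w,
      ReflTransGen (adjIn adjY (imageMV F A)) p q :=
    fun hw p hp q hq => reflTransGen_adjIn_mono (subset_imageMV F hw) (hconn _ p hp q hq)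
  intro y hy z hz
  obtain ⟨x, hxA, hyx⟩ := Set.mem_iUnion₂.mp hy
  obtain ⟨x', hx'A, hzx'⟩ := Set.mem_iUnion₂.mp hz
  suffices ∀ c, ReflTransGen (adjIn adjX A) x c → c ∈ A → ∀ z ∈ F c,
      ReflTransGen (adjIn adjY (imageMV F A)) y z from this x' (hA x hxA x' hx'A) hx'A z hzx'
  intro c hc
  induction hc with
  | refl => exact fun _ => hfibre hxA y hyx
  | @tail u v _ huv ih =>
    obtain ⟨huv, huA, hvA⟩ := huv
    obtain ⟨p, hp, q, hq, rfl | hpq⟩ := hadj u v huv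
    · exact fun _ z hz => (ih huA p hp).trans (hfibre hvA p hq z hz)
    · exact fun _ z hz => ((ih huA p hp).tail
        ⟨hpq, subset_imageMV F huA hp, subset_imageMV F hvA hq⟩).trans (hfibre hvA q hq z hz)

end Digital

theorem connectivity_preserving_iff_general {X Y : Type*}
    (adjX : X → X → Prop) (adjY : Y → Y → Prop)
    (hsymX : ∀ a b, adjX a b → adjX b a)
    (F : X → Set Y) (hne : ∀ x, (F x).Nonempty) :
    ConnPres adjX adjY F ↔
      ((∀ x, ConnIn adjY (F x)) ∧
       (∀ x x', adjX x x' → AdjSets adjY (F x) (F x'))) :=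
  ⟨fun hF => ⟨connIn_of_connPres hF, fun _ _ => adjSets_of_connPres hsymX hne hF⟩,
    fun ⟨hconn, hadj⟩ _ => connIn_imageMV hconn hadj⟩

theorem connectivity_preserving_iff {X Y : Type*}
    (adjX : X → X → Prop) (adjY : Y → Y → Prop)
    (hsymX : ∀ a b, adjX a b → adjX b a) (hirrX : ∀ a, ¬ adjX a a)
    (hsymY : ∀ a b, adjY a b → adjY b a) (hirrY : ∀ a, ¬ adjY a a)
    (F : X → Set Y) (hne : ∀ x, (F x).Nonempty) :
    ConnPres adjX adjY F ↔
      ((∀ x, ConnIn adjY (F x)) ∧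
       (∀ x x', adjX x x' → AdjSets adjY (F x) (F x'))) :=
  connectivity_preserving_iff_general adjX adjY hsymX F hne
end

section
/- Define F : [0,1]_ℤ ⊸ [0,2]_ℤ (with 2-adjacency, i.e., integers m, n adjacent iff |m−n| = 1) by F(0) = {0,2} and F(1) = {1}. Then F has both weak continuity and strong continuity, but F is not connectivity preserving. -/
theorem weak_strong_but_not_connectivity_preserving :
    let adj : ℤ → ℤ → Prop := fun m n => |m - n| = 1
    let X : Type := Set.Icc (0 : ℤ) 1
    let Y : Type := Set.Icc (0 : ℤ) 2
    let adjX : X → X → Prop := fun a b => adj a.1 b.1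
    let adjY : Y → Y → Prop := fun a b => adj a.1 b.1
    let F : X → Set Y := fun x =>
      {y | (x.1 = 0 ∧ (y.1 = 0 ∨ y.1 = 2)) ∨ (x.1 = 1 ∧ y.1 = 1)}
    (∀ x x', adjX x x' → AdjSets adjY (F x) (F x')) ∧
    (∀ x x', adjX x x' →
      (∀ a ∈ F x, ∃ b ∈ F x', a = b ∨ adjY a b) ∧
      (∀ b ∈ F x', ∃ a ∈ F x, b = a ∨ adjY b a)) ∧
    ¬ ConnPres adjX adjY F := by
  intro adj X Y adjX adjY F
  obtain ⟨y0, hv0⟩ : ∃ y : Y, y.1 = 0 := ⟨⟨0, by simp⟩, rfl⟩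
  obtain ⟨y1, hv1⟩ : ∃ y : Y, y.1 = 1 := ⟨⟨1, by simp⟩, rfl⟩
  obtain ⟨y2, hv2⟩ : ∃ y : Y, y.1 = 2 := ⟨⟨2, by simp⟩, rfl⟩
  have hX : ∀ x : X, x.1 = 0 ∨ x.1 = 1 := by
    rintro ⟨x, hx⟩
    simp only [Set.mem_Icc] at hx
    show x = 0 ∨ x = 1
    omega
  have hpair : ∀ x x' : X, adjX x x' →
      (x.1 = 0 ∧ x'.1 = 1) ∨ (x.1 = 1 ∧ x'.1 = 0) := by
    intro x x' h
    simp only [adjX, adj] at h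
    rcases hX x with h0 | h0 <;> rcases hX x' with h1 | h1 <;> rw [h0, h1] at h
    · norm_num at h
    · exact Or.inl ⟨h0, h1⟩
    · exact Or.inr ⟨h0, h1⟩
    · norm_num at h
  refine ⟨?_, ?_, ?_⟩
  · intro x x' h
    rcases hpair x x' h with ⟨h0, h1⟩ | ⟨h1, h0⟩
    · exact ⟨y0, Or.inl ⟨h0, Or.inl hv0⟩, y1, Or.inr ⟨h1, hv1⟩,
        Or.inr (by simp [adjY, adj, hv0, hv1])⟩
    · exact ⟨y1, Or.inr ⟨h1, hv1⟩, y0, Or.inl ⟨h0, Or.inl hv0⟩,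
        Or.inr (by simp [adjY, adj, hv0, hv1])⟩
  · intro x x' h
    rcases hpair x x' h with ⟨h0, h1⟩ | ⟨h1, h0⟩
    · constructor
      · rintro a (⟨-, ha⟩ | ⟨hc, -⟩)
        · refine ⟨y1, Or.inr ⟨h1, hv1⟩, Or.inr ?_⟩
          rcases ha with ha | ha <;> simp [adjY, adj, ha, hv1]
        · omega
      · rintro b (⟨hc, -⟩ | ⟨-, hb⟩)
        · omega
        · exact ⟨y0, Or.inl ⟨h0, Or.inl hv0⟩, Or.inr (by simp [adjY, adj, hb, hv0])⟩
    · constructor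
      · rintro a (⟨hc, -⟩ | ⟨-, ha⟩)
        · omega
        · exact ⟨y0, Or.inl ⟨h0, Or.inl hv0⟩, Or.inr (by simp [adjY, adj, ha, hv0])⟩
      · rintro b (⟨-, hb⟩ | ⟨hc, -⟩)
        · refine ⟨y1, Or.inr ⟨h1, hv1⟩, Or.inr ?_⟩
          rcases hb with hb | hb <;> simp [adjY, adj, hb, hv1]
        · omega
  · intro hCP
    obtain ⟨x0, hx0v⟩ : ∃ x : X, x.1 = 0 := ⟨⟨0, by simp⟩, rfl⟩
    have hA : ConnIn adjX ({x0} : Set X) := by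
      rintro a rfl b rfl; exact Relation.ReflTransGen.refl
    have h := hCP {x0} hA
    have hy0 : y0 ∈ imageMV F {x0} := by
      refine Set.mem_biUnion rfl ?_
      exact Or.inl ⟨hx0v, Or.inl hv0⟩
    have hy2 : y2 ∈ imageMV F {x0} := by
      refine Set.mem_biUnion rfl ?_
      exact Or.inl ⟨hx0v, Or.inr hv2⟩
    have hpath := h y0 hy0 y2 hy2
    have himg : ∀ y ∈ imageMV F ({x0} : Set X), y.1 = 0 ∨ y.1 = 2 := by
      intro y hy
      simp only [imageMV, Set.mem_iUnion] at hy
      obtain ⟨x, hxA, hyF⟩ := hy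
      rcases hyF with ⟨-, hh⟩ | ⟨hc, -⟩
      · exact hh
      · rw [Set.mem_singleton_iff] at hxA
        rw [hxA, hx0v] at hc
        omega
    rcases hpath.cases_head with heq | ⟨c, ⟨hadj, hm, hm'⟩, -⟩
    · have : y0.1 = y2.1 := congrArg Subtype.val heq
      omega
    · simp only [adjY, adj, hv0] at hadj
      rcases himg c hm' with hc | hc <;> rw [hc] at hadj <;> norm_num at hadj
end

section
/- Let X be a connected digital image and let A ⊆ X be nonempty. Then A is a connectivity preserving multivalued retract of X if and only if A is connected. Specifically, if A is connected, the map f : X ⊸ A with f(x) = {x} for x ∈ A and f(x) = A for x ∉ A is a connectivity preserving multivalued retraction. -/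
lemma retract_aux {X : Type*} (adj : X → X → Prop) (A : Set X)
    (hAconn : ConnIn adj A) :
    (∀ x, {z | (x ∈ A ∧ z = x) ∨ (x ∉ A ∧ z ∈ A)} ⊆ A) ∧
    (∀ a ∈ A, {z | (a ∈ A ∧ z = a) ∨ (a ∉ A ∧ z ∈ A)} = {a}) ∧
    ConnPres adj adj
      (fun x => {z | (x ∈ A ∧ z = x) ∨ (x ∉ A ∧ z ∈ A)}) := by
  set f : X → Set X := fun x => {z | (x ∈ A ∧ z = x) ∨ (x ∉ A ∧ z ∈ A)} with hf
  have hsub : ∀ x, f x ⊆ A := by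
    rintro x z (⟨hx, rfl⟩ | ⟨_, hz⟩)
    · exact hx
    · exact hz
  have hret : ∀ a ∈ A, f a = {a} := by
    intro a ha
    ext z
    simp only [hf, Set.mem_setOf_eq, Set.mem_singleton_iff]
    constructor
    · rintro (⟨_, rfl⟩ | ⟨h, _⟩)
      · rfl
      · exact absurd ha h
    · rintro rfl; exact Or.inl ⟨ha, rfl⟩
  refine ⟨hsub, hret, ?_⟩
  intro B hB
  by_cases hBA : B ⊆ A
  · have him : imageMV f B = B := by
      ext z
      simp only [imageMV, Set.mem_iUnion]
      constructor
      · rintro ⟨x, hx, hz⟩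
        rw [hret x (hBA hx)] at hz
        exact hz ▸ hx
      · intro hz
        exact ⟨z, hz, by rw [hret z (hBA hz)]; rfl⟩
    rwa [him]
  · obtain ⟨x₀, hx₀B, hx₀A⟩ := Set.not_subset.mp hBA
    have him : imageMV f B = A := by
      apply Set.Subset.antisymm
      · rintro z hz
        simp only [imageMV, Set.mem_iUnion] at hz
        obtain ⟨x, _, hz⟩ := hz
        exact hsub x hz
      · intro a ha
        simp only [imageMV, Set.mem_iUnion]
        exact ⟨x₀, hx₀B, Or.inr ⟨hx₀A, ha⟩⟩
    rwa [him]

theorem connectivity_preserving_retract_iff_connected {X : Type*}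
    (adj : X → X → Prop)
    (hsym : ∀ a b, adj a b → adj b a) (hirr : ∀ a, ¬ adj a a)
    (hXconn : ConnIn adj (Set.univ : Set X))
    (A : Set X) (hA : A.Nonempty) :
    ((∃ f : X → Set X, (∀ x, f x ⊆ A) ∧ (∀ a ∈ A, f a = {a}) ∧
        ConnPres adj adj f) ↔ ConnIn adj A) ∧
    (ConnIn adj A →
      (∀ x, {z | (x ∈ A ∧ z = x) ∨ (x ∉ A ∧ z ∈ A)} ⊆ A) ∧
      (∀ a ∈ A, {z | (a ∈ A ∧ z = a) ∨ (a ∉ A ∧ z ∈ A)} = {a}) ∧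
      ConnPres adj adj
        (fun x => {z | (x ∈ A ∧ z = x) ∨ (x ∉ A ∧ z ∈ A)})) := by
  constructor
  · constructor
    · rintro ⟨f, hfA, hfa, hcp⟩
      have hS := hcp Set.univ hXconn
      have hSA : imageMV f Set.univ = A := by
        apply Set.Subset.antisymm
        · intro z hz
          simp only [imageMV, Set.mem_iUnion] at hz
          obtain ⟨x, _, hz⟩ := hz
          exact hfA x hz
        · intro a ha
          simp only [imageMV, Set.mem_iUnion]
          exact ⟨a, trivial, by rw [hfa a ha]; rfl⟩
      rwa [hSA] at hS
    · intro hAconn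
      obtain ⟨h1, h2, h3⟩ := retract_aux adj A hAconn
      exact ⟨_, h1, h2, h3⟩
  · exact retract_aux adj A
end

section
/- Let X = [−1,1]²_ℤ ⊆ ℤ² with 8-adjacency (c₂-adjacency) and Y = X \ {(0,0)}. Then the multivalued function r : X ⊸ Y defined by r((0,0)) = Y and r(x) = {x} for x ∈ Y is a connectivity preserving multivalued retraction of X onto Y. -/
/-- 8-adjacency on `ℤ²`: distinct points differing by at most 1 in each
coordinate. -/
def adj8 (p q : ℤ × ℤ) : Prop :=
  p ≠ q ∧ |p.1 - q.1| ≤ 1 ∧ |p.2 - q.2| ≤ 1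

/-- 4-adjacency on `ℤ²`. -/
def adj4 (p q : ℤ × ℤ) : Prop :=
  (|p.1 - q.1| = 1 ∧ p.2 = q.2) ∨ (p.1 = q.1 ∧ |p.2 - q.2| = 1)

/-!
The image under `r` of a set `A ⊆ X` is `A` itself when the centre is not in `A`, and all of `Y`
when it is. So `r` preserves connectedness as soon as `Y`, the ring of the eight boundary points
of the square, is 8-connected, which is seen by walking along the ring.
-/

def punctureRetraction {α : Type*} (X : Set α) (c : α) (p : α) : Set α :=
  {z | (p = c ∧ z ∈ X \ {c}) ∨ (p ≠ c ∧ z = p)}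

section punctureRetraction

variable {α : Type*} {X A : Set α} {c p : α}

lemma punctureRetraction_of_ne (hp : p ≠ c) : punctureRetraction X c p = {p} := by
  ext z
  simp [punctureRetraction, hp]

lemma punctureRetraction_subset (hp : p ∈ X) : punctureRetraction X c p ⊆ X \ {c} := by
  rintro z (⟨-, hz⟩ | ⟨hpc, rfl⟩)
  exacts [hz, ⟨hp, hpc⟩]

lemma imageMV_punctureRetraction_of_mem (hAX : A ⊆ X) (hc : c ∈ A) :
    imageMV (punctureRetraction X c) A = X \ {c} := by
  refine subset_antisymm (Set.iUnion₂_subset fun p hp => punctureRetraction_subset (hAX hp)) ?_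
  exact fun z hz => Set.mem_biUnion hc (Or.inl ⟨rfl, hz⟩)

lemma imageMV_punctureRetraction_of_notMem (hc : c ∉ A) :
    imageMV (punctureRetraction X c) A = A := by
  refine subset_antisymm (Set.iUnion₂_subset fun p hp => ?_) fun z hz => ?_
  · rintro z (⟨rfl, -⟩ | ⟨-, rfl⟩)
    exacts [absurd hp hc, hp]
  · exact Set.mem_biUnion hz (Or.inr ⟨ne_of_mem_of_not_mem hz hc, rfl⟩)

lemma connIn_imageMV_punctureRetraction {adj : α → α → Prop} (hY : ConnIn adj (X \ {c}))
    (hAX : A ⊆ X) (hA : ConnIn adj A) : ConnIn adj (imageMV (punctureRetraction X c) A) := by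
  by_cases hc : c ∈ A
  · rwa [imageMV_punctureRetraction_of_mem hAX hc]
  · rwa [imageMV_punctureRetraction_of_notMem hc]

end punctureRetraction

lemma connIn_of_forall_reflTransGen {α : Type*} {adj : α → α → Prop} [Std.Symm adj]
    {S : Set α} (c : α)
    (h : ∀ y ∈ S, Relation.ReflTransGen (fun u v => adj u v ∧ u ∈ S ∧ v ∈ S) y c) :
    ConnIn adj S := by
  have : Std.Symm fun u v => adj u v ∧ u ∈ S ∧ v ∈ S :=
    ⟨fun _ _ ⟨huv, hu, hv⟩ => ⟨Std.Symm.symm _ _ huv, hv, hu⟩⟩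
  exact fun a ha b hb => (h a ha).trans (Std.Symm.symm _ _ (h b hb))

instance : Std.Symm adj8 :=
  ⟨fun _ _ ⟨hne, h₁, h₂⟩ => ⟨hne.symm, by rwa [abs_sub_comm], by rwa [abs_sub_comm]⟩⟩

def unitSquare : Set (ℤ × ℤ) := {p | p.1 ∈ Set.Icc (-1 : ℤ) 1 ∧ p.2 ∈ Set.Icc (-1 : ℤ) 1}

lemma connIn_unitSquare_diff_origin : ConnIn adj8 (unitSquare \ {(0, 0)}) := by
  refine connIn_of_forall_reflTransGen (1, 1) ?_
  rintro ⟨a, b⟩ ⟨⟨⟨ha₁, ha₂⟩, hb₁, hb₂⟩, hab⟩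
  interval_cases a <;> interval_cases b
  · refine .head (b := (0, -1)) ?_ (.head (b := (1, 0)) ?_ (.single ?_)) <;>
      norm_num [adj8, unitSquare]
  · refine .head (b := (0, 1)) ?_ (.single ?_) <;>
      norm_num [adj8, unitSquare]
  · refine .head (b := (0, 1)) ?_ (.single ?_) <;>
      norm_num [adj8, unitSquare]
  · refine .head (b := (1, 0)) ?_ (.single ?_) <;>
      norm_num [adj8, unitSquare]
  · exact absurd rfl hab
  · exact .single (by norm_num [adj8, unitSquare])
  · refine .head (b := (1, 0)) ?_ (.single ?_) <;>
      norm_num [adj8, unitSquare]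
  · exact .single (by norm_num [adj8, unitSquare])
  · exact .refl

theorem square_minus_center_retraction :
    let X : Set (ℤ × ℤ) :=
      {p | p.1 ∈ Set.Icc (-1 : ℤ) 1 ∧ p.2 ∈ Set.Icc (-1 : ℤ) 1}
    let Y : Set (ℤ × ℤ) := X \ {(0, 0)}
    let r : ℤ × ℤ → Set (ℤ × ℤ) := fun p =>
      {z | (p = (0, 0) ∧ z ∈ Y) ∨ (p ≠ (0, 0) ∧ z = p)}
    (∀ y ∈ Y, r y = {y}) ∧
    (∀ x ∈ X, r x ⊆ Y) ∧
    (∀ A : Set (ℤ × ℤ), A ⊆ X → ConnIn adj8 A →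
      ConnIn adj8 (imageMV r A)) :=
  ⟨fun _ hy => punctureRetraction_of_ne hy.2, fun _ hx => punctureRetraction_subset hx,
    fun _ hAX hA => connIn_imageMV_punctureRetraction connIn_unitSquare_diff_origin hAX hA⟩
end

section
/- Let X = {0} ⊆ ℤ and Y = {0, 2} ⊆ ℤ with 2-adjacency (|m−n| = 1). The multivalued function F : X ⊸ Y with F(0) = Y has both weak and strong continuity, but F is not connectivity preserving: it maps the connected set X onto the disconnected set Y. -/
section

variable {X Y : Type*} (adj : X → X → Prop)

theorem Set.Subsingleton.connIn {A : Set X} (hA : A.Subsingleton) : ConnIn adj A :=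
  fun _ ha _ hb => hA ha hb ▸ Relation.ReflTransGen.refl

theorem Set.Subsingleton.not_adj {A : Set X} (hA : A.Subsingleton)
    (hirr : ∀ x, ¬ adj x x) {x x' : X} (hx : x ∈ A) (hx' : x' ∈ A) : ¬ adj x x' :=
  hA hx hx' ▸ hirr x

theorem not_connIn_pair {a b : X} (hab : a ≠ b) (hadj : ¬ adj a b) :
    ¬ ConnIn adj {a, b} := by
  intro hconn
  have stays : ∀ c, Relation.ReflTransGen
      (fun u v => adj u v ∧ u ∈ ({a, b} : Set X) ∧ v ∈ ({a, b} : Set X)) a c → c = a := by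
    intro c hc
    induction hc with
    | refl => rfl
    | tail _ step ih =>
      obtain ⟨huv, -, hv⟩ := step
      rcases hv with rfl | rfl
      · rfl
      · exact absurd (ih ▸ huv) hadj
  exact hab (stays b (hconn a (by simp) b (by simp))).symm

theorem imageMV_const {A : Set X} (hA : A.Nonempty) (B : Set Y) :
    imageMV (fun _ => B) A = B := by
  simp only [imageMV, Set.biUnion_const hA]

end

theorem weak_strong_but_disconnected_image :
    let adj : ℤ → ℤ → Prop := fun m n => |m - n| = 1
    let X : Set ℤ := {0}
    let Y : Set ℤ := {0, 2}
    let F : ℤ → Set ℤ := fun _ => Y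
    (∀ x ∈ X, ∀ x' ∈ X, adj x x' → AdjSets adj (F x) (F x')) ∧
    (∀ x ∈ X, ∀ x' ∈ X, adj x x' →
      (∀ a ∈ F x, ∃ b ∈ F x', a = b ∨ adj a b) ∧
      (∀ b ∈ F x', ∃ a ∈ F x, b = a ∨ adj b a)) ∧
    ConnIn adj X ∧
    imageMV F X = Y ∧
    ¬ ConnIn adj (imageMV F X) := by
  intro adj X Y F
  have no_adj : ∀ x ∈ X, ∀ x' ∈ X, ¬ adj x x' := fun x hx x' hx' =>
    Set.subsingleton_singleton.not_adj adj (fun n => by simp [adj]) hx hx'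
  have himg : imageMV F X = Y := imageMV_const (Set.singleton_nonempty 0) Y
  refine ⟨fun x hx x' hx' h => absurd h (no_adj x hx x' hx'),
    fun x hx x' hx' h => absurd h (no_adj x hx x' hx'),
    Set.subsingleton_singleton.connIn adj, himg, ?_⟩
  rw [himg]
  exact not_connIn_pair adj (by norm_num) (by norm_num [adj])
end
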